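/- In the Case II setting, for every tracial state τ on Pol(O_F^+) and all μ,ν ∈ {1,…,r} with μ ≠ ν, one has τ(Tr(A_{μν}^*·A_{μν})) = 0. In particular, all entries of the off-diagonal blocks A_{μν} (μ ≠ ν) belong to the Kac ideal J_KAC(Pol(O_F^+)). -/

import Mathlib

open scoped ComplexOrder

/-- The defining relations of `Pol(O_F⁺)`: `U` is unitary and `U·F = F·conj(U)`
(equivalently `U = F·conj(U)·F⁻¹`). -/
def OrthRel {ι : Type} [Fintype ι] [DecidableEq ι] {A : Type} [Ring A] [Algebra ℂ A]
    [StarRing A] (F : Matrix ι ι ℂ) (u : Matrix ι ι A) : Prop :=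
  u * u.conjTranspose = 1 ∧ u.conjTranspose * u = 1 ∧
    u * F.map (algebraMap ℂ A) = F.map (algebraMap ℂ A) * u.map star

/-- A presentation of the universal unital complex *-algebra `Pol(O_F⁺)`:
a unital complex *-algebra carrying a matrix of generators `u` satisfying the
defining relations, universal among all such. -/
structure PolO {ι : Type} [Fintype ι] [DecidableEq ι] (F : Matrix ι ι ℂ) where
  carrier : Type
  [isRing : Ring carrier]
  [isAlgebra : Algebra ℂ carrier]
  [isStarRing : StarRing carrier]
  [isStarModule : StarModule ℂ carrier]
  u : Matrix ι ι carrier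
  rel : OrthRel F u
  universal : ∀ (B : Type) [Ring B] [Algebra ℂ B] [StarRing B] [StarModule ℂ B]
      (v : Matrix ι ι B), OrthRel F v →
      ∃! φ : carrier →⋆ₐ[ℂ] B, ∀ j k, φ (u j k) = v j k

attribute [instance] PolO.isRing PolO.isAlgebra PolO.isStarRing PolO.isStarModule

/-- The defining relations of `Pol(U_N⁺)`: both `U` and `conj(U)` are unitary. -/
def BiUnitary {ι : Type} [Fintype ι] [DecidableEq ι] {A : Type} [Ring A] [Algebra ℂ A]
    [StarRing A] (u : Matrix ι ι A) : Prop :=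
  u * u.conjTranspose = 1 ∧ u.conjTranspose * u = 1 ∧
    u.map star * (u.map star).conjTranspose = 1 ∧ (u.map star).conjTranspose * u.map star = 1

/-- A presentation of the universal unital complex *-algebra `Pol(U_N⁺)` (`N = #ι`). -/
structure PolU (ι : Type) [Fintype ι] [DecidableEq ι] where
  carrier : Type
  [isRing : Ring carrier]
  [isAlgebra : Algebra ℂ carrier]
  [isStarRing : StarRing carrier]
  [isStarModule : StarModule ℂ carrier]
  u : Matrix ι ι carrier
  rel : BiUnitary u
  universal : ∀ (B : Type) [Ring B] [Algebra ℂ B] [StarRing B] [StarModule ℂ B]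
      (v : Matrix ι ι B), BiUnitary v →
      ∃! φ : carrier →⋆ₐ[ℂ] B, ∀ j k, φ (u j k) = v j k

attribute [instance] PolU.isRing PolU.isAlgebra PolU.isStarRing PolU.isStarModule

/-- A unital complex *-algebra is RFD if finite-dimensional *-representations
separate its points. -/
def IsRFD (A : Type) [Ring A] [Algebra ℂ A] [StarRing A] : Prop :=
  ∀ a : A, a ≠ 0 → ∃ (n : ℕ) (π : A →⋆ₐ[ℂ] Matrix (Fin n) (Fin n) ℂ), π a ≠ 0

/-- A tracial state on a unital complex *-algebra. -/
structure TracialState (A : Type) [Ring A] [Algebra ℂ A] [StarRing A] where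
  toFun : A →ₗ[ℂ] ℂ
  map_one' : toFun 1 = 1
  nonneg' : ∀ a : A, 0 ≤ toFun (star a * a)
  tracial' : ∀ a b : A, toFun (a * b) = toFun (b * a)

/-- The Kac ideal: elements killed by `τ(a^* a)` for every tracial state `τ`. -/
def kacIdeal (A : Type) [Ring A] [Algebra ℂ A] [StarRing A] : Set A :=
  {a : A | ∀ τ : TracialState A, τ.toFun (star a * a) = 0}

/-- The RFD ideal: the intersection of the kernels of all finite-dimensional
*-representations. -/
def rfdIdeal (A : Type) [Ring A] [Algebra ℂ A] [StarRing A] : Set A :=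
  {a : A | ∀ (n : ℕ) (π : A →⋆ₐ[ℂ] Matrix (Fin n) (Fin n) ℂ), π a = 0}

/-- A subset of a *-ring which is a two-sided ideal closed under the star operation. -/
def IsStarIdeal {A : Type} [Ring A] [StarRing A] (T : Set A) : Prop :=
  (0 : A) ∈ T ∧ (∀ a b, a ∈ T → b ∈ T → a + b ∈ T) ∧
    (∀ x a, a ∈ T → x * a ∈ T ∧ a * x ∈ T) ∧ (∀ a, a ∈ T → star a ∈ T)

/-- The two-sided *-ideal generated by a set. -/
def starIdealSpan {A : Type} [Ring A] [StarRing A] (S : Set A) : Set A :=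
  ⋂₀ {T : Set A | IsStarIdeal T ∧ S ⊆ T}

/-- The index set in the Case II setting: for each `ν = 1,…,r` a block `P_ν ⊕ Q_ν`
of size `2M_ν`. -/
abbrev CaseIIIdx (r : ℕ) (M : Fin r → ℕ) : Type := Σ ν : Fin r, (Fin (M ν) ⊕ Fin (M ν))

/-- The Case II matrix `F`: block-diagonal with blocks
`[[0, q_ν·I_{M_ν}], [−q_ν⁻¹·I_{M_ν}, 0]]` for `ν = 1,…,r`. -/
noncomputable def FCaseII (r : ℕ) (q : Fin r → ℝ) (M : Fin r → ℕ) :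
    Matrix (CaseIIIdx r M) (CaseIIIdx r M) ℂ := fun a b =>
  match a, b with
  | ⟨ν, .inl j⟩, ⟨μ, .inr k⟩ =>
      if ν = μ ∧ (j : ℕ) = (k : ℕ) then ((q ν : ℝ) : ℂ) else 0
  | ⟨ν, .inr j⟩, ⟨μ, .inl k⟩ =>
      if ν = μ ∧ (j : ℕ) = (k : ℕ) then ((-(q ν)⁻¹ : ℝ) : ℂ) else 0
  | _, _ => 0

/-!
For a tracial state `τ` the weights `τ(u_{ab}^* u_{ab}) ≥ 0` form a doubly stochastic matrix
(traciality gives the row sums). The relation `uF = F ū` yields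
`u_{P_μ P_ν}^* = (q_μ/q_ν) u_{Q_μ Q_ν}` and `u_{P_μ Q_ν}^* = -q_μ q_ν u_{Q_μ P_ν}`, so the masses
`a, b, c, d` of the blocks `P_μ × P_ν`, `P_μ × Q_ν`, `Q_μ × P_ν`, `Q_μ × Q_ν` satisfy
`a_{μν} = (q_μ/q_ν)² d_{μν}` and `b_{μν} = (q_μ q_ν)² c_{μν}`. Comparing the
total mass of the `P`-rows and of the `P`-columns gives `∑ (c - b) = 0` with
`c - b = (1 - q_μ² q_ν²) c ≥ 0`, hence `b = c`. Then `e = a - d` has vanishing row and column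
sums, so `∑_{μν} (q_μ - q_ν) e_{μν} = 0`, while each term equals
`(q_μ - q_ν)² (q_μ + q_ν) q_μ⁻² a_{μν} ≥ 0`; as the `q_μ` are distinct, `a_{μν} = 0` for `μ ≠ ν`.
-/

namespace TracialState

variable {A : Type} [Ring A] [Algebra ℂ A] [StarRing A] (τ : TracialState A)

def normSq (x : A) : ℝ := (τ.toFun (star x * x)).re

lemma ofReal_normSq (x : A) : (τ.normSq x : ℂ) = τ.toFun (star x * x) :=
  Complex.ext rfl (Complex.nonneg_iff.1 (τ.nonneg' x)).2

lemma normSq_nonneg (x : A) : 0 ≤ τ.normSq x :=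
  (Complex.nonneg_iff.1 (τ.nonneg' x)).1

lemma normSq_star (x : A) : τ.normSq (star x) = τ.normSq x := by
  rw [normSq, normSq, star_star, τ.tracial']

lemma normSq_smul [StarModule ℂ A] (c : ℂ) (x : A) :
    τ.normSq (c • x) = Complex.normSq c * τ.normSq x := by
  rw [normSq, normSq, star_smul, smul_mul_smul_comm, map_smul, smul_eq_mul, Complex.star_def,
    ← Complex.normSq_eq_conj_mul_self, Complex.re_ofReal_mul]

variable {ι : Type} [Fintype ι] [DecidableEq ι]

lemma sum_normSq_row {u : Matrix ι ι A} (hu : u * u.conjTranspose = 1) (a : ι) :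
    ∑ b, τ.normSq (u a b) = 1 := by
  have h := congrFun (congrFun hu a) a
  simp only [Matrix.mul_apply, Matrix.conjTranspose_apply, Matrix.one_apply_eq] at h
  have htr : ∀ b, τ.normSq (u a b) = (τ.toFun (u a b * star (u a b))).re := fun b => by
    rw [normSq, τ.tracial']
  simp_rw [htr, ← Complex.re_sum, ← map_sum]
  rw [h, τ.map_one', Complex.one_re]

lemma sum_normSq_col {u : Matrix ι ι A} (hu : u.conjTranspose * u = 1) (b : ι) :
    ∑ a, τ.normSq (u a b) = 1 := by
  have h := congrFun (congrFun hu b) b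
  simp only [Matrix.mul_apply, Matrix.conjTranspose_apply, Matrix.one_apply_eq] at h
  simp_rw [normSq, ← Complex.re_sum, ← map_sum]
  rw [h, τ.map_one', Complex.one_re]

end TracialState

lemma sum_sum_sub_mul_eq_zero {R ι : Type*} [CommRing R] [Fintype ι] (g : ι → R)
    {e : ι → ι → R} (hrow : ∀ μ, ∑ ν, e μ ν = 0) (hcol : ∀ ν, ∑ μ, e μ ν = 0) :
    ∑ μ, ∑ ν, (g μ - g ν) * e μ ν = 0 := by
  calc ∑ μ, ∑ ν, (g μ - g ν) * e μ ν
      = ∑ μ, g μ * ∑ ν, e μ ν - ∑ ν, g ν * ∑ μ, e μ ν := by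
        simp only [sub_mul, Finset.sum_sub_distrib, Finset.mul_sum]
        rw [Finset.sum_comm (f := fun μ ν => g ν * e μ ν)]
    _ = 0 := by simp [hrow, hcol]

lemma eq_zero_of_sum_sum_eq_zero {ι κ : Type*} [Fintype ι] [Fintype κ] {f : ι → κ → ℝ}
    (hf : ∀ μ ν, 0 ≤ f μ ν) (h : ∑ μ, ∑ ν, f μ ν = 0) (μ : ι) (ν : κ) : f μ ν = 0 := by
  have hrow := (Fintype.sum_eq_zero_iff_of_nonneg fun μ =>
    Finset.sum_nonneg fun ν _ => hf μ ν).1 h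
  exact congrFun ((Fintype.sum_eq_zero_iff_of_nonneg (hf μ)).1 (congrFun hrow μ)) ν

section BlockWeights

variable {ι : Type*} [Fintype ι]

/- `w μ s ν t` is the mass of the block `(μ, s) × (ν, t)`, the Boolean distinguishing the
`P` (`false`) and `Q` (`true`) halves of a Case II block. -/
variable {q : ι → ℝ} (hq0 : ∀ μ, 0 < q μ) {m : ι → ℝ} {w : ι → Bool → ι → Bool → ℝ}
  (hw : ∀ μ s ν t, 0 ≤ w μ s ν t)
  (hrow : ∀ μ s, ∑ ν, ∑ t, w μ s ν t = m μ) (hcol : ∀ ν t, ∑ μ, ∑ s, w μ s ν t = m ν)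
include hq0 hw hrow hcol

lemma weight_false_true_eq_true_false (hq1 : ∀ μ, q μ ≤ 1)
    (hPQ : ∀ μ ν, w μ false ν true = (q μ * q ν) ^ 2 * w μ true ν false) (μ ν : ι) :
    w μ false ν true = w μ true ν false := by
  have htotal : ∑ μ, ∑ ν, (w μ true ν false - w μ false ν true) = 0 := by
    have hr := Finset.sum_congr rfl fun μ (_ : μ ∈ Finset.univ) => hrow μ false
    have hc := Finset.sum_congr rfl fun ν (_ : ν ∈ Finset.univ) => hcol ν false
    rw [Finset.sum_comm] at hc
    simp only [Fintype.sum_bool, Finset.sum_add_distrib] at hr hc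
    simp only [Finset.sum_sub_distrib]
    linarith
  have hnonneg : ∀ μ ν, 0 ≤ w μ true ν false - w μ false ν true := fun μ ν => by
    have hprod : (q μ * q ν) ^ 2 ≤ 1 :=
      pow_le_one₀ (mul_pos (hq0 μ) (hq0 ν)).le (mul_le_one₀ (hq1 μ) (hq0 ν).le (hq1 ν))
    rw [hPQ]
    nlinarith [hw μ true ν false]
  linarith [eq_zero_of_sum_sum_eq_zero hnonneg htotal μ ν]

lemma weight_false_false_eq_zero_of_ne (hq1 : ∀ μ, q μ ≤ 1) (hq : Function.Injective q)
    (hPP : ∀ μ ν, w μ false ν false = (q μ / q ν) ^ 2 * w μ true ν true)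
    (hPQ : ∀ μ ν, w μ false ν true = (q μ * q ν) ^ 2 * w μ true ν false)
    {μ ν : ι} (hne : μ ≠ ν) : w μ false ν false = 0 := by
  have hPQ_QP := weight_false_true_eq_true_false hq0 hw hrow hcol hq1 hPQ
  set e : ι → ι → ℝ := fun μ ν => w μ false ν false - w μ true ν true
  have hrow_e : ∀ μ, ∑ ν, e μ ν = 0 := fun μ => by
    have hP := hrow μ false
    have hQ := hrow μ true
    simp only [Fintype.sum_bool, Finset.sum_add_distrib, hPQ_QP] at hP hQ
    simp only [e, Finset.sum_sub_distrib]
    linarith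
  have hcol_e : ∀ ν, ∑ μ, e μ ν = 0 := fun ν => by
    have hP := hcol ν false
    have hQ := hcol ν true
    simp only [Fintype.sum_bool, Finset.sum_add_distrib, hPQ_QP] at hP hQ
    simp only [e, Finset.sum_sub_distrib]
    linarith
  have hterm : ∀ μ ν, (q μ - q ν) * e μ ν
      = (q μ - q ν) ^ 2 * (q μ + q ν) / q μ ^ 2 * w μ false ν false := fun μ ν => by
    have := (hq0 μ).ne'
    have := (hq0 ν).ne'
    simp only [e]
    rw [hPP]
    field_simp
    ring
  have hnonneg : ∀ μ ν, 0 ≤ (q μ - q ν) * e μ ν := fun μ ν => by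
    rw [hterm]
    have := hq0 μ
    have := hq0 ν
    exact mul_nonneg (by positivity) (hw _ _ _ _)
  have hzero := eq_zero_of_sum_sum_eq_zero hnonneg (sum_sum_sub_mul_eq_zero q hrow_e hcol_e) μ ν
  rw [hterm] at hzero
  have hcoeff : (q μ - q ν) ^ 2 * (q μ + q ν) / q μ ^ 2 ≠ 0 := by
    have := sub_ne_zero.2 (hq.ne hne)
    have := hq0 μ
    have := hq0 ν
    positivity
  exact (mul_eq_zero.1 hzero).resolve_left hcoeff

end BlockWeights

section CaseII

variable {r : ℕ} {q : Fin r → ℝ} {M : Fin r → ℕ}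

/-- `false` selects the `P_ν` half of the `ν`-th block, `true` the `Q_ν` half. -/
def caseIIIndex (ν : Fin r) (s : Bool) (j : Fin (M ν)) : CaseIIIdx r M :=
  ⟨ν, cond s (.inr j) (.inl j)⟩

lemma sum_caseIIIdx {β : Type*} [AddCommMonoid β] (f : CaseIIIdx r M → β) :
    ∑ a, f a = ∑ ν, ∑ s, ∑ j, f (caseIIIndex ν s j) := by
  simp only [Fintype.sum_sigma, Fintype.sum_sum_type, Fintype.sum_bool, caseIIIndex, cond,
    add_comm]

lemma FCaseII_apply_inl_right (a : CaseIIIdx r M) (ν : Fin r) (k : Fin (M ν)) :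
    FCaseII r q M a ⟨ν, .inl k⟩ = if a = ⟨ν, .inr k⟩ then ((-(q ν)⁻¹ : ℝ) : ℂ) else 0 := by
  rcases a with ⟨μ, j | j⟩ <;> obtain rfl | h := eq_or_ne μ ν <;> simp [FCaseII, Fin.val_inj, *]

lemma FCaseII_apply_inr_right (a : CaseIIIdx r M) (ν : Fin r) (k : Fin (M ν)) :
    FCaseII r q M a ⟨ν, .inr k⟩ = if a = ⟨ν, .inl k⟩ then ((q ν : ℝ) : ℂ) else 0 := by
  rcases a with ⟨μ, j | j⟩ <;> obtain rfl | h := eq_or_ne μ ν <;> simp [FCaseII, Fin.val_inj, *]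

lemma FCaseII_apply_inr_left (μ : Fin r) (j : Fin (M μ)) (b : CaseIIIdx r M) :
    FCaseII r q M ⟨μ, .inr j⟩ b = if b = ⟨μ, .inl j⟩ then ((-(q μ)⁻¹ : ℝ) : ℂ) else 0 := by
  rcases b with ⟨ν, k | k⟩ <;> obtain rfl | h := eq_or_ne μ ν <;>
    simp [FCaseII, Fin.val_inj, eq_comm, *]

variable {A : Type} [Ring A] [Algebra ℂ A]

lemma mul_FCaseII_apply_inl (u : Matrix (CaseIIIdx r M) (CaseIIIdx r M) A)
    (a : CaseIIIdx r M) (ν : Fin r) (k : Fin (M ν)) :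
    (u * (FCaseII r q M).map (algebraMap ℂ A)) a ⟨ν, .inl k⟩
      = ((-(q ν)⁻¹ : ℝ) : ℂ) • u a ⟨ν, .inr k⟩ := by
  simp [Matrix.mul_apply, FCaseII_apply_inl_right, Algebra.smul_def, Algebra.commutes,
    apply_ite (algebraMap ℂ A)]

lemma mul_FCaseII_apply_inr (u : Matrix (CaseIIIdx r M) (CaseIIIdx r M) A)
    (a : CaseIIIdx r M) (ν : Fin r) (k : Fin (M ν)) :
    (u * (FCaseII r q M).map (algebraMap ℂ A)) a ⟨ν, .inr k⟩
      = ((q ν : ℝ) : ℂ) • u a ⟨ν, .inl k⟩ := by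
  simp [Matrix.mul_apply, FCaseII_apply_inr_right, Algebra.smul_def, Algebra.commutes,
    apply_ite (algebraMap ℂ A)]

lemma FCaseII_mul_apply_inr (v : Matrix (CaseIIIdx r M) (CaseIIIdx r M) A)
    (μ : Fin r) (j : Fin (M μ)) (b : CaseIIIdx r M) :
    ((FCaseII r q M).map (algebraMap ℂ A) * v) ⟨μ, .inr j⟩ b
      = ((-(q μ)⁻¹ : ℝ) : ℂ) • v ⟨μ, .inl j⟩ b := by
  simp [Matrix.mul_apply, FCaseII_apply_inr_left, Algebra.smul_def,
    apply_ite (algebraMap ℂ A)]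

variable [StarRing A]

lemma star_apply_inl_of_orthRel {u : Matrix (CaseIIIdx r M) (CaseIIIdx r M) A}
    (hq0 : ∀ ν, 0 < q ν) (hu : OrthRel (FCaseII r q M) u)
    (μ : Fin r) (j : Fin (M μ)) (b : CaseIIIdx r M) :
    star (u ⟨μ, .inl j⟩ b)
      = ((-q μ : ℝ) : ℂ) • (u * (FCaseII r q M).map (algebraMap ℂ A)) ⟨μ, .inr j⟩ b := by
  have hqμ : ((q μ : ℝ) : ℂ) ≠ 0 := Complex.ofReal_ne_zero.2 (hq0 μ).ne'
  rw [hu.2.2, FCaseII_mul_apply_inr, Matrix.map_apply, smul_smul]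
  push_cast
  rw [neg_mul_neg, mul_inv_cancel₀ hqμ, one_smul]

variable (τ : TracialState A) (u : Matrix (CaseIIIdx r M) (CaseIIIdx r M) A)

def blockNormSq (μ : Fin r) (s : Bool) (ν : Fin r) (t : Bool) : ℝ :=
  ∑ j : Fin (M μ), ∑ k : Fin (M ν), τ.normSq (u (caseIIIndex μ s j) (caseIIIndex ν t k))

lemma sum_blockNormSq_row (hu : u * u.conjTranspose = 1) (μ : Fin r) (s : Bool) :
    ∑ ν, ∑ t, blockNormSq τ u μ s ν t = M μ := by
  calc ∑ ν, ∑ t, blockNormSq τ u μ s ν t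
      = ∑ j, ∑ ν, ∑ t, ∑ k, τ.normSq (u (caseIIIndex μ s j) (caseIIIndex ν t k)) := by
        simp only [blockNormSq]
        exact (Finset.sum_congr rfl fun ν _ => Finset.sum_comm).trans Finset.sum_comm
    _ = ∑ j : Fin (M μ), ∑ b, τ.normSq (u (caseIIIndex μ s j) b) := by
        simp only [sum_caseIIIdx]
    _ = M μ := by simp [τ.sum_normSq_row hu]

lemma sum_blockNormSq_col (hu : u.conjTranspose * u = 1) (ν : Fin r) (t : Bool) :
    ∑ μ, ∑ s, blockNormSq τ u μ s ν t = M ν := by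
  calc ∑ μ, ∑ s, blockNormSq τ u μ s ν t
      = ∑ k, ∑ μ, ∑ s, ∑ j, τ.normSq (u (caseIIIndex μ s j) (caseIIIndex ν t k)) := by
        simp only [blockNormSq]
        refine (Finset.sum_congr rfl fun μ _ => ?_).trans Finset.sum_comm
        exact (Finset.sum_congr rfl fun s _ => Finset.sum_comm).trans Finset.sum_comm
    _ = ∑ k : Fin (M ν), ∑ a, τ.normSq (u a (caseIIIndex ν t k)) := by
        simp only [sum_caseIIIdx]
    _ = M ν := by simp [τ.sum_normSq_col hu]

lemma map_star_mul_self_eq_zero_of_blockNormSq_eq_zero {μ ν : Fin r} {s t : Bool}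
    (h : blockNormSq τ u μ s ν t = 0) (j : Fin (M μ)) (k : Fin (M ν)) :
    τ.toFun (star (u (caseIIIndex μ s j) (caseIIIndex ν t k)) *
      u (caseIIIndex μ s j) (caseIIIndex ν t k)) = 0 := by
  rw [← τ.ofReal_normSq, eq_zero_of_sum_sum_eq_zero (fun _ _ => τ.normSq_nonneg _) h j k,
    Complex.ofReal_zero]

variable [StarModule ℂ A] {u}

lemma normSq_apply_inl_inl (hq0 : ∀ ν, 0 < q ν) (hu : OrthRel (FCaseII r q M) u)
    (μ ν : Fin r) (j : Fin (M μ)) (k : Fin (M ν)) :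
    τ.normSq (u ⟨μ, .inl j⟩ ⟨ν, .inl k⟩)
      = (q μ / q ν) ^ 2 * τ.normSq (u ⟨μ, .inr j⟩ ⟨ν, .inr k⟩) := by
  rw [← τ.normSq_star, star_apply_inl_of_orthRel hq0 hu, mul_FCaseII_apply_inl, smul_smul,
    ← Complex.ofReal_mul, τ.normSq_smul, Complex.normSq_ofReal]
  ring

lemma normSq_apply_inl_inr (hq0 : ∀ ν, 0 < q ν) (hu : OrthRel (FCaseII r q M) u)
    (μ ν : Fin r) (j : Fin (M μ)) (k : Fin (M ν)) :
    τ.normSq (u ⟨μ, .inl j⟩ ⟨ν, .inr k⟩)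
      = (q μ * q ν) ^ 2 * τ.normSq (u ⟨μ, .inr j⟩ ⟨ν, .inl k⟩) := by
  rw [← τ.normSq_star, star_apply_inl_of_orthRel hq0 hu, mul_FCaseII_apply_inr, smul_smul,
    ← Complex.ofReal_mul, τ.normSq_smul, Complex.normSq_ofReal]
  ring

lemma blockNormSq_false_false (hq0 : ∀ ν, 0 < q ν) (hu : OrthRel (FCaseII r q M) u)
    (μ ν : Fin r) :
    blockNormSq τ u μ false ν false = (q μ / q ν) ^ 2 * blockNormSq τ u μ true ν true := by
  simp only [blockNormSq, Finset.mul_sum]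
  exact Finset.sum_congr rfl fun j _ => Finset.sum_congr rfl fun k _ =>
    normSq_apply_inl_inl τ hq0 hu μ ν j k

lemma blockNormSq_false_true (hq0 : ∀ ν, 0 < q ν) (hu : OrthRel (FCaseII r q M) u)
    (μ ν : Fin r) :
    blockNormSq τ u μ false ν true = (q μ * q ν) ^ 2 * blockNormSq τ u μ true ν false := by
  simp only [blockNormSq, Finset.mul_sum]
  exact Finset.sum_congr rfl fun j _ => Finset.sum_congr rfl fun k _ =>
    normSq_apply_inl_inr τ hq0 hu μ ν j k

lemma blockNormSq_false_false_eq_zero_of_ne (hq0 : ∀ ν, 0 < q ν) (hmono : StrictMono q)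
    (hq1 : ∀ ν, q ν ≤ 1) (hu : OrthRel (FCaseII r q M) u) {μ ν : Fin r} (hne : μ ≠ ν) :
    blockNormSq τ u μ false ν false = 0 :=
  weight_false_false_eq_zero_of_ne hq0
    (fun _ _ _ _ => Finset.sum_nonneg fun _ _ => Finset.sum_nonneg fun _ _ => τ.normSq_nonneg _)
    (sum_blockNormSq_row τ u hu.1) (sum_blockNormSq_col τ u hu.2.1) hq1 hmono.injective
    (blockNormSq_false_false τ hq0 hu) (blockNormSq_false_true τ hq0 hu) hne

end CaseII

/-- in the Case II setting, every tracial state `τ` on `Pol(O_F⁺)` satisfies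
`τ(Tr(A_{μν}^* A_{μν})) = 0` for all `μ ≠ ν`; in particular all entries of the off-diagonal
blocks `A_{μν}` (`μ ≠ ν`) lie in the Kac ideal. -/
theorem caseII_offdiag_A_blocks_in_kac (r : ℕ) (hr : 1 ≤ r) (q : Fin r → ℝ)
    (hq0 : ∀ ν, 0 < q ν) (hmono : StrictMono q) (hqlast : q ⟨r - 1, by omega⟩ = 1)
    (M : Fin r → ℕ)
    (P : PolO (FCaseII r q M)) :
    (∀ (τ : TracialState P.carrier) (μ ν : Fin r), μ ≠ ν →
        τ.toFun (∑ k : Fin (M ν), ∑ j : Fin (M μ),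
          star (P.u ⟨μ, .inl j⟩ ⟨ν, .inl k⟩) * P.u ⟨μ, .inl j⟩ ⟨ν, .inl k⟩) = 0) ∧
      ∀ μ ν : Fin r, μ ≠ ν → ∀ (j : Fin (M μ)) (k : Fin (M ν)),
        P.u ⟨μ, .inl j⟩ ⟨ν, .inl k⟩ ∈ kacIdeal P.carrier := by
  have hq1 : ∀ ν, q ν ≤ 1 := fun ν =>
    hqlast ▸ hmono.monotone (Fin.le_def.2 (show (ν : ℕ) ≤ r - 1 by omega))
  have hentry : ∀ (τ : TracialState P.carrier) (μ ν : Fin r), μ ≠ ν → ∀ j k,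
      τ.toFun (star (P.u ⟨μ, .inl j⟩ ⟨ν, .inl k⟩) * P.u ⟨μ, .inl j⟩ ⟨ν, .inl k⟩) = 0 :=
    fun τ μ ν hne => map_star_mul_self_eq_zero_of_blockNormSq_eq_zero τ P.u
      (blockNormSq_false_false_eq_zero_of_ne τ hq0 hmono hq1 P.rel hne)
  refine ⟨fun τ μ ν hne => ?_, fun μ ν hne j k τ => hentry τ μ ν hne j k⟩
  simp [map_sum, hentry τ μ ν hne]
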